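/- arXiv:2603.04693 — 2 statements merged into one kernel-verified Lean document; each statement's English description precedes it below -/
import Mathlib

section
/- For every n ≥ 1 there exist two minimal regulated partitions 𝒫 and 𝒬 of ℝⁿ that are orthogonal, i.e., for every x ∈ ℝⁿ the set of boundary vectors of x with respect to 𝒫 is disjoint from the set of boundary vectors of x with respect to 𝒬. In particular, there exists a minimal regulated partition of ℝⁿ. -/
/-- An (full-dimensional) rectangle in `ι → ℝ`: a product of nondegenerate closed intervals. -/
def IsRect {ι : Type*} (R : Set (ι → ℝ)) : Prop :=
  ∃ a b : ι → ℝ, (∀ i, a i < b i) ∧ R = Set.Icc a b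

/-- `F` is a face of the rectangle `Q` with normal vector `e j`. -/
def IsFaceWithNormal {ι : Type*} (F Q : Set (ι → ℝ)) (j : ι) : Prop :=
  ∃ a b : ι → ℝ, (∀ i, a i < b i) ∧ Q = Set.Icc a b ∧
    (F = {y ∈ Q | y j = a j} ∨ F = {y ∈ Q | y j = b j})

/-- `F` is a face of the rectangle `Q`. -/
def IsFaceOf {ι : Type*} (F Q : Set (ι → ℝ)) : Prop :=
  ∃ j, IsFaceWithNormal F Q j

/-- `e j` is a boundary vector of `x` with respect to the collection `P`. -/
def IsBoundaryVector {ι : Type*} (P : Set (Set (ι → ℝ))) (x : ι → ℝ) (j : ι) : Prop :=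
  ∃ Q ∈ P, ∃ F, IsFaceWithNormal F Q j ∧ x ∈ F

/-- `ν_P(x)`: the number of members of `P` containing `x`. -/
noncomputable def nuP {ι : Type*} (P : Set (Set (ι → ℝ))) (x : ι → ℝ) : ℕ :=
  Set.ncard {Q | Q ∈ P ∧ x ∈ Q}

/-- `β_P(x)`: the number of boundary vectors of `x` with respect to `P`. -/
noncomputable def betaP {ι : Type*} (P : Set (Set (ι → ℝ))) (x : ι → ℝ) : ℕ :=
  Set.ncard {j | IsBoundaryVector P x j}

/-- A locally regulated cover of `R`. -/
def IsLocRegCover {ι : Type*} (R : Set (ι → ℝ)) (P : Set (Set (ι → ℝ))) : Prop :=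
  P.Finite ∧ (∀ Q ∈ P, IsRect Q) ∧ ⋃₀ P = R

/-- A locally regulated partition of `R`. -/
def IsLocRegPartition {ι : Type*} (R : Set (ι → ℝ)) (P : Set (Set (ι → ℝ))) : Prop :=
  IsLocRegCover R P ∧ ∀ Q₁ ∈ P, ∀ Q₂ ∈ P, Q₁ ≠ Q₂ → interior Q₁ ∩ interior Q₂ = ∅

/-- The collection `P` is about `x` (inside `R`). -/
def IsAbout {ι : Type*} (R : Set (ι → ℝ)) (P : Set (Set (ι → ℝ))) (x : ι → ℝ) : Prop :=
  ∀ Q ∈ P, ∀ F, IsFaceOf F Q → x ∈ F ∨ ∃ G, IsFaceOf G R ∧ F ⊆ G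

/-- A regulated partition of `ι → ℝ`. -/
def IsRegPartition {ι : Type*} (P : Set (Set (ι → ℝ))) : Prop :=
  (∃ (D : Set ℝ) (d : ℝ), 0 < d ∧ (∀ r₁ ∈ D, ∀ r₂ ∈ D, r₁ ≠ r₂ → d < |r₁ - r₂|) ∧
    ∀ Q ∈ P, ∃ a b : ι → ℝ, (∀ i, a i ∈ D ∧ b i ∈ D ∧ a i < b i) ∧ Q = Set.Icc a b) ∧
  (∀ x : ι → ℝ, ∃ Q ∈ P, x ∈ Q) ∧
  (∀ Q₁ ∈ P, ∀ Q₂ ∈ P, Q₁ ≠ Q₂ → interior Q₁ ∩ interior Q₂ = ∅)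

/-- `v` is the boundary incidence sequence of `x` with respect to the rectangle `Q`. -/
def IsBIS {ι : Type*} (Q : Set (ι → ℝ)) (x : ι → ℝ) (v : ι → ℤ) : Prop :=
  ∃ a b : ι → ℝ, (∀ i, a i < b i) ∧ Q = Set.Icc a b ∧ x ∈ Q ∧
    ∀ j, v j = if x j = a j then 1 else if x j = b j then -1 else 0

/-!
Brick `z ∈ ℤⁿ` is the unit cube whose lower corner has first coordinate
`c + z₀ + w(z₁, …, zₙ₋₁) / 2ᴺ`, with `w(d) = ∑ⱼ 2ʲ dⱼ` the binary weight, and whose other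
coordinates are those of brick `(z₁, …, zₙ₋₁)` one dimension lower; so each layer is a row of
unit intervals shifted by a dyadic amount that depends on the layers above it.

Dropping the first coordinate maps the bricks through `x` to bricks through the projection of `x`.
Two of them have the same image only if one has `x` on its lower face in the first coordinate, and
at most one brick does: two such bricks have tails `p, p'` with `|pⱼ - p'ⱼ| ≤ 1` and
`2ᴺ ∣ w(p - p')`, which forces `p = p'` when `n ≤ N`. Hence each dimension adds at most one brick
through `x`, giving at most `n + 1`. All faces lie on the lattice `c + 2⁻ᴺℤ`, and the lattices for
`c` and `c + 2⁻ᴺ⁻¹` are disjoint, so the two partitions have no boundary vector in common.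
-/

namespace BrickPartition

open Finset

lemma eq_of_zero_eq_of_tail_eq {α : Type*} {n : ℕ} {z z' : Fin (n + 1) → α} (h0 : z 0 = z' 0)
    (htail : Fin.tail z = Fin.tail z') : z = z' := by
  rw [← Fin.cons_self_tail z, ← Fin.cons_self_tail z', h0, htail]

def weight {n : ℕ} (d : Fin n → ℤ) : ℤ := ∑ j : Fin n, 2 ^ (j : ℕ) * d j

lemma weight_succ {n : ℕ} (d : Fin (n + 1) → ℤ) : weight d = d 0 + 2 * weight (Fin.tail d) := by
  simp only [weight, Fin.sum_univ_succ, Fin.val_zero, pow_zero, one_mul, Fin.val_succ, pow_succ,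
    mul_sum, Fin.tail]
  congr 1
  exact sum_congr rfl fun j _ => by ring

lemma weight_sub {n : ℕ} (d d' : Fin n → ℤ) : weight d - weight d' = weight (d - d') := by
  simp only [weight, ← sum_sub_distrib, Pi.sub_apply, mul_sub]

lemma abs_weight_lt {n : ℕ} {d : Fin n → ℤ} (hd : ∀ j, |d j| ≤ 1) : |weight d| < 2 ^ n := by
  induction n with
  | zero => simp [weight]
  | succ n ih =>
    have htail := abs_lt.mp (ih (d := Fin.tail d) fun j => hd j.succ)
    have h0 := abs_le.mp (hd 0)
    rw [weight_succ, abs_lt, pow_succ]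
    constructor <;> linarith [htail.1, htail.2, h0.1, h0.2]

lemma eq_zero_of_weight_eq_zero {n : ℕ} {d : Fin n → ℤ} (hd : ∀ j, |d j| ≤ 1)
    (h : weight d = 0) : d = 0 := by
  induction n with
  | zero => exact Subsingleton.elim _ _
  | succ n ih =>
    rw [weight_succ] at h
    have h0 : d 0 = 0 := by
      have := abs_le.mp (hd 0)
      omega
    exact eq_of_zero_eq_of_tail_eq h0 (ih (fun j => hd j.succ) (by omega))

noncomputable section Bricks

variable (N : ℕ) (c : ℝ)

def corner : {n : ℕ} → (Fin n → ℤ) → Fin n → ℝ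
  | 0, _ => Fin.elim0
  | _ + 1, z => Fin.cons (c + z 0 + weight (Fin.tail z) / 2 ^ N) (corner (Fin.tail z))

lemma corner_zero {n : ℕ} (z : Fin (n + 1) → ℤ) :
    corner N c z 0 = c + z 0 + weight (Fin.tail z) / 2 ^ N := rfl

def brick {n : ℕ} (z : Fin n → ℤ) : Set (Fin n → ℝ) := Set.Icc (corner N c z) (corner N c z + 1)

def bricks (n : ℕ) : Set (Set (Fin n → ℝ)) := Set.range (brick N c (n := n))

def lattice : Set ℝ := Set.range fun m : ℤ => c + m / 2 ^ N

variable {N c}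

lemma mem_brick_iff {n : ℕ} {z : Fin n → ℤ} {x : Fin n → ℝ} :
    x ∈ brick N c z ↔ ∀ i, corner N c z i ≤ x i ∧ x i ≤ corner N c z i + 1 := by
  simp only [brick, Set.mem_Icc, Pi.le_def, Pi.add_apply, Pi.one_apply, forall_and]

lemma mem_brick_succ_iff {n : ℕ} {z : Fin (n + 1) → ℤ} {x : Fin (n + 1) → ℝ} :
    x ∈ brick N c z ↔ (corner N c z 0 ≤ x 0 ∧ x 0 ≤ corner N c z 0 + 1) ∧
      Fin.tail x ∈ brick N c (Fin.tail z) := by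
  rw [mem_brick_iff, Fin.forall_fin_succ, mem_brick_iff]
  rfl

lemma corner_mem_lattice {n : ℕ} (z : Fin n → ℤ) (i : Fin n) : corner N c z i ∈ lattice N c := by
  induction n with
  | zero => exact i.elim0
  | succ n ih =>
    cases i using Fin.cases with
    | zero =>
      refine ⟨2 ^ N * z 0 + weight (Fin.tail z), ?_⟩
      simp only [corner_zero, Int.cast_add, Int.cast_mul, Int.cast_pow, Int.cast_ofNat]
      field_simp
      ring
    | succ i => exact ih (Fin.tail z) i

lemma add_one_mem_lattice {r : ℝ} (hr : r ∈ lattice N c) : r + 1 ∈ lattice N c := by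
  obtain ⟨m, rfl⟩ := hr
  refine ⟨m + 2 ^ N, ?_⟩
  push_cast
  field_simp
  ring

lemma exists_mem_brick {n : ℕ} (x : Fin n → ℝ) : ∃ z, x ∈ brick N c z := by
  induction n with
  | zero => exact ⟨0, mem_brick_iff.mpr fun i => i.elim0⟩
  | succ n ih =>
    obtain ⟨p, hp⟩ := ih (Fin.tail x)
    set t := x 0 - c - weight p / 2 ^ N
    refine ⟨Fin.cons ⌊t⌋ p, mem_brick_succ_iff.mpr ⟨?_, by simpa using hp⟩⟩
    simp only [corner_zero, Fin.cons_zero, Fin.tail_cons]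
    constructor <;> linarith [Int.floor_le t, Int.lt_floor_add_one t]

lemma eq_of_forall_mem_Ioo {n : ℕ} {x : Fin n → ℝ} {z z' : Fin n → ℤ}
    (hz : ∀ i, x i ∈ Set.Ioo (corner N c z i) (corner N c z i + 1))
    (hz' : ∀ i, x i ∈ Set.Ioo (corner N c z' i) (corner N c z' i + 1)) : z = z' := by
  induction n with
  | zero => exact Subsingleton.elim _ _
  | succ n ih =>
    have htail : Fin.tail z = Fin.tail z' :=
      ih (x := Fin.tail x) (fun i => hz i.succ) fun i => hz' i.succ
    have h0 := hz 0
    have h0' := hz' 0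
    rw [corner_zero, htail] at h0
    rw [corner_zero] at h0'
    have hhead : z 0 = z' 0 := by
      set t := x 0 - c - weight (Fin.tail z') / 2 ^ N
      rw [← Int.floor_eq_iff.mpr (show (z 0 : ℝ) ≤ t ∧ t < z 0 + 1 by
          constructor <;> linarith [h0.1, h0.2]),
        Int.floor_eq_iff.mpr (show (z' 0 : ℝ) ≤ t ∧ t < z' 0 + 1 by
          constructor <;> linarith [h0'.1, h0'.2])]
    exact eq_of_zero_eq_of_tail_eq hhead htail

lemma mem_interior_brick_iff {n : ℕ} {z : Fin n → ℤ} {x : Fin n → ℝ} :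
    x ∈ interior (brick N c z) ↔ ∀ i, x i ∈ Set.Ioo (corner N c z i) (corner N c z i + 1) := by
  simp only [brick, ← Set.pi_univ_Icc, interior_pi_set Set.finite_univ, interior_Icc, Set.mem_pi,
    Set.mem_univ, true_implies, Pi.add_apply, Pi.one_apply]

lemma brick_injective {n : ℕ} : Function.Injective (brick N c (n := n)) := by
  intro z z' h
  have hcorner : corner N c z = corner N c z' :=
    ((Set.Icc_eq_Icc_iff (le_add_of_nonneg_right zero_le_one)).mp h).1
  have hmid : ∀ i, corner N c z i + 1 / 2 ∈ Set.Ioo (corner N c z i) (corner N c z i + 1) :=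
    fun i => ⟨by linarith, by linarith⟩
  exact eq_of_forall_mem_Ioo hmid (hcorner ▸ hmid)

lemma abs_weight_div_lt_one {n : ℕ} (hn : n ≤ N) {d : Fin n → ℤ} (hd : ∀ j, |d j| ≤ 1) :
    |(weight d : ℝ) / 2 ^ N| < 1 := by
  have hlt : |(weight d : ℝ)| < 2 ^ N := by
    calc |(weight d : ℝ)| = ((|weight d| : ℤ) : ℝ) := by push_cast; rfl
      _ < (2 : ℝ) ^ n := by exact_mod_cast abs_weight_lt hd
      _ ≤ 2 ^ N := pow_le_pow_right₀ one_le_two hn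
  rw [abs_div, abs_of_pos (by positivity : (0 : ℝ) < 2 ^ N)]
  exact (div_lt_one (by positivity)).mpr hlt

lemma abs_sub_le_one_of_mem_brick {n : ℕ} (hn : n ≤ N) {x : Fin n → ℝ} {z z' : Fin n → ℤ}
    (hz : x ∈ brick N c z) (hz' : x ∈ brick N c z') (i : Fin n) : |z i - z' i| ≤ 1 := by
  induction n with
  | zero => exact i.elim0
  | succ n ih =>
    rw [mem_brick_succ_iff] at hz hz'
    have htail := ih (by omega) hz.2 hz'.2
    cases i using Fin.cases with
    | succ i => exact htail i
    | zero =>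
      have hσ := abs_lt.mp (abs_weight_div_lt_one (N := N) (d := Fin.tail z - Fin.tail z')
        (by omega) htail)
      rw [← weight_sub, Int.cast_sub, sub_div] at hσ
      simp only [corner_zero] at hz hz'
      have hlt : z 0 - z' 0 < 2 := by
        exact_mod_cast (show ((z 0 - z' 0 : ℤ) : ℝ) < 2 by push_cast; linarith)
      have hgt : -2 < z 0 - z' 0 := by
        exact_mod_cast (show (-2 : ℝ) < ((z 0 - z' 0 : ℤ) : ℝ) by push_cast; linarith)
      exact abs_le.mpr ⟨by omega, by omega⟩

lemma eq_of_corner_zero_eq {n : ℕ} (hn : n ≤ N) {x : Fin (n + 1) → ℝ} {z z' : Fin (n + 1) → ℤ}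
    (hz : x ∈ brick N c z) (hz' : x ∈ brick N c z') (h : corner N c z 0 = corner N c z' 0) :
    z = z' := by
  set d := Fin.tail z - Fin.tail z'
  have hd : ∀ j, |d j| ≤ 1 :=
    abs_sub_le_one_of_mem_brick hn (mem_brick_succ_iff.mp hz).2 (mem_brick_succ_iff.mp hz').2
  have hdvd : 2 ^ N ∣ weight d := by
    refine ⟨z' 0 - z 0, ?_⟩
    rw [corner_zero, corner_zero] at h
    rw [← weight_sub]
    have : (weight (Fin.tail z) : ℝ) - weight (Fin.tail z') = 2 ^ N * (z' 0 - z 0) := by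
      field_simp at h
      linarith
    exact_mod_cast this
  have hweight : weight d = 0 := Int.eq_zero_of_abs_lt_dvd hdvd
    ((abs_weight_lt hd).trans_le (pow_le_pow_right₀ one_le_two hn))
  have htail : Fin.tail z = Fin.tail z' := sub_eq_zero.mp (eq_zero_of_weight_eq_zero hd hweight)
  have hhead : z 0 = z' 0 := by
    rw [corner_zero, corner_zero, htail] at h
    exact_mod_cast (by linarith : (z 0 : ℝ) = z' 0)
  exact eq_of_zero_eq_of_tail_eq hhead htail

lemma eq_of_tail_eq_of_corner_zero_ne {n : ℕ} {x : Fin (n + 1) → ℝ} {z z' : Fin (n + 1) → ℤ}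
    (hz : x ∈ brick N c z) (hz' : x ∈ brick N c z') (htail : Fin.tail z = Fin.tail z')
    (hne : corner N c z 0 ≠ x 0) (hne' : corner N c z' 0 ≠ x 0) : z = z' := by
  have h0 := (mem_brick_succ_iff.mp hz).1
  have h0' := (mem_brick_succ_iff.mp hz').1
  simp only [corner_zero] at h0 h0' hne hne'
  rw [htail] at h0 hne
  set t := x 0 - c - weight (Fin.tail z') / 2 ^ N
  have hhead : z 0 + 1 = z' 0 + 1 := by
    rw [← Int.ceil_eq_iff.mpr (show ((z 0 + 1 : ℤ) : ℝ) - 1 < t ∧ t ≤ (z 0 + 1 : ℤ) by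
        push_cast; constructor <;> linarith [lt_of_le_of_ne h0.1 hne]),
      Int.ceil_eq_iff.mpr (show ((z' 0 + 1 : ℤ) : ℝ) - 1 < t ∧ t ≤ (z' 0 + 1 : ℤ) by
        push_cast; constructor <;> linarith [lt_of_le_of_ne h0'.1 hne'])]
  exact eq_of_zero_eq_of_tail_eq (add_right_cancel hhead) htail

lemma card_le_of_forall_mem_brick {n : ℕ} (hn : n ≤ N) {x : Fin n → ℝ} {F : Finset (Fin n → ℤ)}
    (hF : ∀ z ∈ F, x ∈ brick N c z) : #F ≤ n + 1 := by
  classical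
  induction n with
  | zero => exact (card_le_one.mpr fun _ _ _ _ => Subsingleton.elim _ _).trans le_add_self
  | succ n ih =>
    have hon : #(F.filter fun z => corner N c z 0 = x 0) ≤ 1 :=
      card_le_one.mpr fun z hz z' hz' => eq_of_corner_zero_eq (by omega)
        (hF z (mem_filter.mp hz).1) (hF z' (mem_filter.mp hz').1)
        ((mem_filter.mp hz).2.trans (mem_filter.mp hz').2.symm)
    have hoff : #(F.filter fun z => ¬corner N c z 0 = x 0) ≤ n + 1 := by
      rw [← card_image_of_injOn fun z hz z' hz' htail =>
        eq_of_tail_eq_of_corner_zero_ne (hF z (mem_filter.mp hz).1) (hF z' (mem_filter.mp hz').1)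
          htail (mem_filter.mp hz).2 (mem_filter.mp hz').2]
      refine ih (by omega) (x := Fin.tail x) fun p hp => ?_
      obtain ⟨z, hz, rfl⟩ := mem_image.mp hp
      exact (mem_brick_succ_iff.mp (hF z (mem_filter.mp hz).1)).2
    rw [← card_filter_add_card_filter_not fun z => corner N c z 0 = x 0]
    omega

lemma card_le_of_forall_mem_bricks {n : ℕ} (hn : n ≤ N) {x : Fin n → ℝ}
    {T : Finset (Set (Fin n → ℝ))} (hT : ∀ S ∈ T, S ∈ bricks N c n ∧ x ∈ S) : #T ≤ n + 1 := by
  classical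
  calc #T = #(T.preimage (brick N c) brick_injective.injOn) := by
        rw [card_preimage]
        exact congrArg card (filter_true_of_mem fun S hS => (hT S hS).1).symm
    _ ≤ n + 1 := card_le_of_forall_mem_brick hn fun z hz => (hT _ (mem_preimage.mp hz)).2

lemma lt_abs_sub_of_mem_lattice {r₁ r₂ : ℝ} (h₁ : r₁ ∈ lattice N c) (h₂ : r₂ ∈ lattice N c)
    (hne : r₁ ≠ r₂) : 1 / 2 ^ (N + 1) < |r₁ - r₂| := by
  obtain ⟨m₁, rfl⟩ := h₁
  obtain ⟨m₂, rfl⟩ := h₂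
  have hm : (1 : ℝ) ≤ |(m₁ : ℝ) - m₂| := by
    rw [← Int.cast_sub, ← Int.cast_abs]
    exact_mod_cast Int.one_le_abs (sub_ne_zero.mpr fun h => hne (by rw [h]))
  calc 1 / 2 ^ (N + 1) < 1 / 2 ^ N := by gcongr <;> norm_num
    _ ≤ |(m₁ : ℝ) - m₂| / 2 ^ N := by gcongr
    _ = |c + m₁ / 2 ^ N - (c + m₂ / 2 ^ N)| := by
        rw [add_sub_add_left_eq_sub, ← sub_div, abs_div,
          abs_of_pos (by positivity : (0 : ℝ) < 2 ^ N)]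

lemma isRegPartition_bricks (n : ℕ) : IsRegPartition (bricks N c n) := by
  refine ⟨⟨lattice N c, 1 / 2 ^ (N + 1), by positivity,
    fun r₁ h₁ r₂ h₂ => lt_abs_sub_of_mem_lattice h₁ h₂, ?_⟩, fun x => ?_, ?_⟩
  · rintro _ ⟨z, rfl⟩
    exact ⟨corner N c z, corner N c z + 1, fun i => ⟨corner_mem_lattice z i,
      add_one_mem_lattice (corner_mem_lattice z i), by simp⟩, rfl⟩
  · obtain ⟨z, hz⟩ := exists_mem_brick (N := N) (c := c) x
    exact ⟨_, ⟨z, rfl⟩, hz⟩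
  · rintro _ ⟨z, rfl⟩ _ ⟨z', rfl⟩ hne
    refine Set.eq_empty_iff_forall_notMem.mpr fun x ⟨hx, hx'⟩ => hne ?_
    rw [eq_of_forall_mem_Ioo (mem_interior_brick_iff.mp hx) (mem_interior_brick_iff.mp hx')]

lemma mem_lattice_of_isBoundaryVector {n : ℕ} {x : Fin n → ℝ} {j : Fin n}
    (h : IsBoundaryVector (bricks N c n) x j) : x j ∈ lattice N c := by
  obtain ⟨_, ⟨z, rfl⟩, F, ⟨a, b, -, hab, hF⟩, hxF⟩ := h
  obtain ⟨rfl, rfl⟩ := (Set.Icc_eq_Icc_iff (le_add_of_nonneg_right zero_le_one)).mp hab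
  rcases hF with rfl | rfl <;> rw [hxF.2]
  · exact corner_mem_lattice z j
  · exact add_one_mem_lattice (corner_mem_lattice z j)

end Bricks

lemma disjoint_lattice_add_half (N : ℕ) (c : ℝ) :
    Disjoint (lattice N c) (lattice N (c + 1 / 2 ^ (N + 1))) := by
  refine Set.disjoint_left.mpr ?_
  rintro _ ⟨m, rfl⟩ ⟨m', h⟩
  have : ((2 * m' + 1 : ℤ) : ℝ) = (2 * m : ℤ) := by
    rw [pow_succ] at h
    push_cast
    field_simp at h
    linarith
  have := Int.cast_injective this
  omega

end BrickPartition

theorem stmt9_general (n : ℕ) :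
    ∃ P Q : Set (Set (Fin n → ℝ)),
      IsRegPartition P ∧ IsRegPartition Q ∧
      (∀ x : Fin n → ℝ, ∀ T : Finset (Set (Fin n → ℝ)),
        (∀ S ∈ T, S ∈ P ∧ x ∈ S) → T.card ≤ n + 1) ∧
      (∀ x : Fin n → ℝ, ∀ T : Finset (Set (Fin n → ℝ)),
        (∀ S ∈ T, S ∈ Q ∧ x ∈ S) → T.card ≤ n + 1) ∧
      (∀ (x : Fin n → ℝ) (j : Fin n),
        ¬(IsBoundaryVector P x j ∧ IsBoundaryVector Q x j)) := by
  refine ⟨BrickPartition.bricks n 0 n, BrickPartition.bricks n (1 / 2 ^ (n + 1)) n,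
    BrickPartition.isRegPartition_bricks n, BrickPartition.isRegPartition_bricks n,
    fun _ _ => BrickPartition.card_le_of_forall_mem_bricks le_rfl,
    fun _ _ => BrickPartition.card_le_of_forall_mem_bricks le_rfl, ?_⟩
  rintro x j ⟨hP, hQ⟩
  have hdisj := BrickPartition.disjoint_lattice_add_half n 0
  rw [zero_add] at hdisj
  exact hdisj.ne_of_mem (BrickPartition.mem_lattice_of_isBoundaryVector hP)
    (BrickPartition.mem_lattice_of_isBoundaryVector hQ) rfl

/-- for every `n ≥ 1` there exist two orthogonal minimal regulated partitions of
`ℝⁿ`; in particular a minimal regulated partition of `ℝⁿ` exists. -/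
theorem stmt9 (n : ℕ) (hn : 1 ≤ n) :
    ∃ P Q : Set (Set (Fin n → ℝ)),
      IsRegPartition P ∧ IsRegPartition Q ∧
      (∀ x : Fin n → ℝ, ∀ T : Finset (Set (Fin n → ℝ)),
        (∀ S ∈ T, S ∈ P ∧ x ∈ S) → T.card ≤ n + 1) ∧
      (∀ x : Fin n → ℝ, ∀ T : Finset (Set (Fin n → ℝ)),
        (∀ S ∈ T, S ∈ Q ∧ x ∈ S) → T.card ≤ n + 1) ∧
      (∀ (x : Fin n → ℝ) (j : Fin n),
        ¬(IsBoundaryVector P x j ∧ IsBoundaryVector Q x j)) :=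
  stmt9_general n
end

section
/- Let R be a 2-dimensional rectangle in ℝ² and let 𝒮 be a finite collection of pairwise disjoint 2-dimensional subrectangles of R. Then there exists a minimal locally regulated partition 𝒫 of R with 𝒮 ⊆ 𝒫. -/
/-!
Cut `Icc A B` by the vertical lines through the vertical edges of the members of `S`. A member
of `S` meeting the open slab between two consecutive lines crosses it completely, so the slab
splits into these members and the gaps between them, the cells. At an interior point `x` of a
partition each of the four open quadrants at `x` is entered by exactly one member, and comparing
these four members gives `ν = β + 1` unless they are pairwise distinct. This cannot happen here:
if one of the two upper members is a cell, `x` lies on its bottom edge, which lies on the top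
edge of a member of `S` through `x`; so on each side of the vertical line through `x` a member of
`S` contains `x`, against disjointness.
-/

open Set Function Filter Topology

section Rectangles

variable {ι : Type*}

theorem IsRect.eq_Icc {Q : Set (ι → ℝ)} (hQ : IsRect Q) :
    (∀ i, sInf Q i < sSup Q i) ∧ Q = Icc (sInf Q) (sSup Q) := by
  obtain ⟨a, b, hab, rfl⟩ := hQ
  have hle : a ≤ b := fun i => (hab i).le
  rw [csInf_Icc hle, csSup_Icc hle]
  exact ⟨hab, rfl⟩

theorem IsRect.mem_iff {Q : Set (ι → ℝ)} (hQ : IsRect Q) {x : ι → ℝ} :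
    x ∈ Q ↔ sInf Q ≤ x ∧ x ≤ sSup Q :=
  Set.ext_iff.1 hQ.eq_Icc.2 x

theorem IsRect.isClosed {Q : Set (ι → ℝ)} (hQ : IsRect Q) : IsClosed Q := by
  obtain ⟨a, b, -, rfl⟩ := hQ
  exact isClosed_Icc

theorem isClosed_sUnion_of_isRect {P : Set (Set (ι → ℝ))} (hfin : P.Finite)
    (hP : ∀ Q ∈ P, IsRect Q) : IsClosed (⋃₀ P) := by
  rw [sUnion_eq_biUnion]
  exact hfin.isClosed_biUnion fun Q hQ => (hP Q hQ).isClosed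

theorem mem_Icc_fin_two {a b p : Fin 2 → ℝ} :
    p ∈ Icc a b ↔ (a 0 ≤ p 0 ∧ p 0 ≤ b 0) ∧ (a 1 ≤ p 1 ∧ p 1 ≤ b 1) := by
  simp only [mem_Icc, Pi.le_def, Fin.forall_fin_two]
  tauto

theorem mem_interior_Icc_iff [Finite ι] {a b z : ι → ℝ} :
    z ∈ interior (Icc a b) ↔ ∀ i, a i < z i ∧ z i < b i := by
  rw [← pi_univ_Icc, interior_pi_set finite_univ]
  simp only [mem_univ_pi, interior_Icc, mem_Ioo]

theorem isBoundaryVector_iff {P : Set (Set (ι → ℝ))} (hP : ∀ Q ∈ P, IsRect Q) {x : ι → ℝ} {j : ι} :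
    IsBoundaryVector P x j ↔ ∃ K ∈ P, x ∈ K ∧ (x j = sInf K j ∨ x j = sSup K j) := by
  constructor
  · rintro ⟨K, hK, F, ⟨a, b, hab, rfl, hF⟩, hxF⟩
    have hle : a ≤ b := fun i => (hab i).le
    refine ⟨_, hK, ?_⟩
    rw [csInf_Icc hle, csSup_Icc hle]
    rcases hF with rfl | rfl
    exacts [⟨hxF.1, Or.inl hxF.2⟩, ⟨hxF.1, Or.inr hxF.2⟩]
  · rintro ⟨K, hK, hxK, hx | hx⟩
    · exact ⟨K, hK, _, ⟨_, _, (hP K hK).eq_Icc.1, (hP K hK).eq_Icc.2, Or.inl rfl⟩, hxK, hx⟩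
    · exact ⟨K, hK, _, ⟨_, _, (hP K hK).eq_Icc.1, (hP K hK).eq_Icc.2, Or.inr rfl⟩, hxK, hx⟩

end Rectangles

section Orthants

variable {ι : Type*}

/-- `K ∋ x` meets the open orthant at `x` with sign pattern `σ` (`true` meaning the positive
direction). -/
def ReachesOrthant (K : Set (ι → ℝ)) (x : ι → ℝ) (σ : ι → Bool) : Prop :=
  ∀ i, if σ i then x i < sSup K i else sInf K i < x i

def signVec (σ : ι → Bool) : ι → ℝ := fun i => if σ i then 1 else -1

theorem IsRect.exists_reachesOrthant {K : Set (ι → ℝ)} (hK : IsRect K) (x : ι → ℝ) :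
    ∃ σ, ReachesOrthant K x σ := by
  refine ⟨fun i => decide (x i < sSup K i), fun i => ?_⟩
  by_cases h : x i < sSup K i
  · simp only [h, decide_true, if_true]
  · simp only [h, decide_false, Bool.false_eq_true, if_false]
    linarith [hK.eq_Icc.1 i]

theorem ReachesOrthant.update_iff [DecidableEq ι] {K : Set (ι → ℝ)} {x : ι → ℝ} {σ : ι → Bool}
    (h : ReachesOrthant K x σ) (j : ι) :
    ReachesOrthant K x (update σ j (!σ j)) ↔ sInf K j < x j ∧ x j < sSup K j := by
  constructor
  · intro h'
    have hj := h j
    have hj' := h' j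
    rw [update_self] at hj'
    cases hσ : σ j <;> simp only [hσ, Bool.not_false, Bool.not_true, if_true, if_false,
      Bool.false_eq_true] at hj hj' <;> exact ⟨by assumption, by assumption⟩
  · rintro hx i
    rcases eq_or_ne i j with rfl | hij
    · rw [update_self]
      cases σ i <;> simp only [Bool.not_false, Bool.not_true, if_true, if_false,
        Bool.false_eq_true, hx]
    · rw [update_of_ne hij]
      exact h i

theorem ReachesOrthant.of_not {K : Set (ι → ℝ)} {x : ι → ℝ} {σ : ι → Bool}
    (h : ReachesOrthant K x σ) (h' : ReachesOrthant K x fun i => !σ i) (τ : ι → Bool) :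
    ReachesOrthant K x τ := by
  intro i
  have hi := h i
  have hi' := h' i
  cases hσ : σ i <;> cases τ i <;> simp only [hσ, Bool.not_false, Bool.not_true, if_true,
    if_false, Bool.false_eq_true] at hi hi' ⊢ <;> assumption

theorem ReachesOrthant.eventually_mem_interior [Finite ι] {K : Set (ι → ℝ)} (hK : IsRect K)
    {x : ι → ℝ} (hx : x ∈ K) {σ : ι → Bool} (h : ReachesOrthant K x σ) :
    ∀ᶠ t in 𝓝[>] (0 : ℝ), x + t • signVec σ ∈ interior K := by
  have hK' := hK.eq_Icc
  rw [hK'.2] at hx ⊢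
  simp only [mem_interior_Icc_iff, eventually_all]
  intro i
  have hi := h i
  have := hx.1 i
  have := hx.2 i
  by_cases hσ : σ i
  · simp only [hσ, if_true] at hi
    filter_upwards [Ioo_mem_nhdsGT (sub_pos.2 hi)] with t ht
    simp only [signVec, hσ, if_true, Pi.add_apply, Pi.smul_apply, smul_eq_mul, mul_one]
    constructor <;> linarith [ht.1, ht.2]
  · simp only [hσ, Bool.false_eq_true, if_false] at hi
    filter_upwards [Ioo_mem_nhdsGT (sub_pos.2 hi)] with t ht
    simp only [signVec, hσ, Bool.false_eq_true, if_false, Pi.add_apply, Pi.smul_apply,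
      smul_eq_mul, mul_neg, mul_one]
    constructor <;> linarith [ht.1, ht.2]

theorem reachesOrthant_of_add_smul_mem {K : Set (ι → ℝ)} (hK : IsRect K) {x : ι → ℝ}
    {σ : ι → Bool} {t : ℝ} (ht : 0 < t) (hz : x + t • signVec σ ∈ K) :
    ReachesOrthant K x σ := by
  rw [hK.eq_Icc.2] at hz
  intro i
  have h1 := hz.1 i
  have h2 := hz.2 i
  by_cases hσ : σ i
  · simp only [signVec, hσ, if_true, Pi.add_apply, Pi.smul_apply, smul_eq_mul, mul_one] at h2 ⊢
    linarith
  · simp only [signVec, hσ, Bool.false_eq_true, if_false, Pi.add_apply, Pi.smul_apply,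
      smul_eq_mul, mul_neg, mul_one] at h1 ⊢
    linarith

variable {R : Set (ι → ℝ)} {P : Set (Set (ι → ℝ))}

theorem IsLocRegPartition.isRect_of_mem (hP : IsLocRegPartition R P) {K : Set (ι → ℝ)}
    (hK : K ∈ P) : IsRect K :=
  hP.1.2.1 K hK

theorem IsLocRegPartition.exists_mem_reachesOrthant (hP : IsLocRegPartition R P) {x : ι → ℝ}
    (hx : x ∈ interior R) (σ : ι → Bool) : ∃ K ∈ P, x ∈ K ∧ ReachesOrthant K x σ := by
  obtain ⟨⟨hfin, hrect, hunion⟩, -⟩ := hP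
  set U := ⋃₀ {K | K ∈ P ∧ x ∉ K}
  have hU : IsClosed U :=
    isClosed_sUnion_of_isRect (hfin.subset fun K hK => hK.1) fun K hK => hrect K hK.1
  have hnhds : interior R ∩ Uᶜ ∈ 𝓝 x :=
    (isOpen_interior.inter hU.isOpen_compl).mem_nhds ⟨hx, fun ⟨K, hK, hxK⟩ => hK.2 hxK⟩
  have hlim : Tendsto (fun t : ℝ => x + t • signVec σ) (𝓝[>] 0) (𝓝 x) := by
    refine Tendsto.mono_left ?_ nhdsWithin_le_nhds
    simpa using ((continuous_id.smul continuous_const).const_add x).tendsto (0 : ℝ)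
  obtain ⟨t, ⟨hzR, hzU⟩, ht⟩ := ((hlim.eventually hnhds).and self_mem_nhdsWithin).exists
  obtain ⟨K, hK, hzK⟩ : x + t • signVec σ ∈ ⋃₀ P := hunion ▸ interior_subset hzR
  have hxK : x ∈ K := by_contra fun hxK => hzU ⟨K, ⟨hK, hxK⟩, hzK⟩
  exact ⟨K, hK, hxK, reachesOrthant_of_add_smul_mem (hrect K hK) ht hzK⟩

theorem IsLocRegPartition.eq_of_reachesOrthant [Finite ι] (hP : IsLocRegPartition R P) {x : ι → ℝ}
    {σ : ι → Bool} {K K' : Set (ι → ℝ)} (hK : K ∈ P) (hK' : K' ∈ P) (hxK : x ∈ K)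
    (hxK' : x ∈ K') (h : ReachesOrthant K x σ) (h' : ReachesOrthant K' x σ) : K = K' := by
  by_contra hne
  obtain ⟨t, hzK, hzK'⟩ := ((h.eventually_mem_interior (hP.isRect_of_mem hK) hxK).and
    (h'.eventually_mem_interior (hP.isRect_of_mem hK') hxK')).exists
  exact (hP.2 K hK K' hK' hne).subset ⟨hzK, hzK'⟩

end Orthants

section Count

variable {ι : Type*} [Finite ι] {R : Set (ι → ℝ)} {P : Set (Set (ι → ℝ))} {x : ι → ℝ}
  {N : (ι → Bool) → Set (ι → ℝ)}

namespace IsLocRegPartition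

variable (hP : IsLocRegPartition R P) (hN : ∀ σ, N σ ∈ P ∧ x ∈ N σ ∧ ReachesOrthant (N σ) x σ)
include hP hN

theorem eq_apply_of_reachesOrthant {K : Set (ι → ℝ)} (hK : K ∈ P) (hxK : x ∈ K) {σ : ι → Bool}
    (h : ReachesOrthant K x σ) : K = N σ :=
  hP.eq_of_reachesOrthant hK (hN σ).1 hxK (hN σ).2.1 h (hN σ).2.2

theorem setOf_mem_eq_range : {K | K ∈ P ∧ x ∈ K} = range N := by
  ext K
  constructor
  · rintro ⟨hK, hxK⟩
    obtain ⟨σ, hσ⟩ := (hP.isRect_of_mem hK).exists_reachesOrthant x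
    exact ⟨σ, (hP.eq_apply_of_reachesOrthant hN hK hxK hσ).symm⟩
  · rintro ⟨σ, rfl⟩
    exact ⟨(hN σ).1, (hN σ).2.1⟩

theorem isBoundaryVector_iff_exists_ne [DecidableEq ι] (j : ι) :
    IsBoundaryVector P x j ↔ ∃ σ, N σ ≠ N (update σ j (!σ j)) := by
  rw [isBoundaryVector_iff fun _ => hP.isRect_of_mem]
  constructor
  · rintro ⟨K, hK, hxK, hxj⟩
    obtain ⟨σ, hσ⟩ := (hP.isRect_of_mem hK).exists_reachesOrthant x
    obtain rfl := hP.eq_apply_of_reachesOrthant hN hK hxK hσ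
    refine ⟨σ, fun heq => ?_⟩
    have hin := (hσ.update_iff j).1 (heq ▸ (hN _).2.2)
    rcases hxj with hxj | hxj <;> linarith [hin.1, hin.2]
  · rintro ⟨σ, hne⟩
    obtain ⟨hK, hxK, hσ⟩ := hN σ
    refine ⟨N σ, hK, hxK, ?_⟩
    have hmem := (hP.isRect_of_mem hK).mem_iff.1 hxK
    by_contra hend
    push Not at hend
    refine hne (hP.eq_apply_of_reachesOrthant hN hK hxK ((hσ.update_iff j).2 ?_))
    exact ⟨(hmem.1 j).lt_of_ne hend.1.symm, (hmem.2 j).lt_of_ne hend.2⟩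

theorem apply_eq_of_apply_eq_not {σ : ι → Bool} (h : N σ = N fun i => !σ i) (τ : ι → Bool) :
    N τ = N σ :=
  (hP.eq_apply_of_reachesOrthant hN (hN σ).1 (hN σ).2.1
    ((hN σ).2.2.of_not (h ▸ (hN _).2.2) τ)).symm

end IsLocRegPartition

end Count

section Planar

theorem update_vec_two_one {α : Type*} (a b c : α) : update ![a, b] 1 c = ![a, c] := by
  ext i; fin_cases i <;> rfl

theorem ncard_setOf_fin_two (p : Fin 2 → Prop) [DecidablePred p] :
    {j | p j}.ncard = (if p 0 then 1 else 0) + (if p 1 then 1 else 0) := by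
  rw [ncard_eq_toFinset_card', toFinset_ofPred, Finset.card_filter, Fin.sum_univ_two]

/-- Here `a, b, c, d` stand for the members of a partition entering the NE, NW, SW and SE
quadrants at a point; the two summands count the vertical and the horizontal boundary vector. -/
theorem ncard_quadrants {α : Type*} [DecidableEq α] {a b c d : α}
    (hac : a = c → b = a ∧ d = a) (hbd : b = d → a = b ∧ c = b)
    (hcross : a = b ∨ b = c ∨ c = d ∨ d = a) :
    ({a, b, c, d} : Set α).ncard =
      ((if a ≠ b ∨ c ≠ d then 1 else 0) + (if a ≠ d ∨ b ≠ c then 1 else 0)) + 1 := by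
  rcases eq_or_ne a c with rfl | hac'
  · obtain ⟨rfl, rfl⟩ := hac rfl
    simp
  rcases eq_or_ne b d with rfl | hbd'
  · obtain ⟨rfl, rfl⟩ := hbd rfl
    simp at hac'
  rcases hcross with rfl | rfl | rfl | rfl
  · rcases eq_or_ne c d with rfl | hcd
    · simp [hac']
    · simp [hac', hbd', hcd, ncard_insert_of_notMem]
  · rcases eq_or_ne a d with rfl | had
    · simp [hac', hac'.symm]
    · simp [hac', hbd', had, ncard_insert_of_notMem]
  · rcases eq_or_ne a b with rfl | hab
    · simp [hac']
    · simp [hac', hbd', hab, ncard_insert_of_notMem]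
  · rcases eq_or_ne b c with rfl | hbc
    · simp [hac', hac'.symm]
    · simp [hac', hac'.symm, hbd', hbc, ncard_insert_of_notMem]

theorem range_fin_two_bool {α : Type*} (N : (Fin 2 → Bool) → α) :
    range N = {N ![true, true], N ![false, true], N ![false, false], N ![true, false]} := by
  ext K
  simp [Fin.exists_fin_succ_pi, Fin.exists_fin_zero_pi, Bool.exists_bool]
  grind

theorem exists_ne_update_zero_iff {α : Type*} (N : (Fin 2 → Bool) → α) :
    (∃ σ, N σ ≠ N (update σ 0 (!σ 0))) ↔
      N ![true, true] ≠ N ![false, true] ∨ N ![false, false] ≠ N ![true, false] := by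
  simp [Fin.exists_fin_succ_pi, Fin.exists_fin_zero_pi, Bool.exists_bool]
  grind

theorem exists_ne_update_one_iff {α : Type*} (N : (Fin 2 → Bool) → α) :
    (∃ σ, N σ ≠ N (update σ 1 (!σ 1))) ↔
      N ![true, true] ≠ N ![true, false] ∨ N ![false, true] ≠ N ![false, false] := by
  simp [Fin.exists_fin_succ_pi, Fin.exists_fin_zero_pi, Bool.exists_bool, update_vec_two_one]
  grind

theorem ncard_range_eq_ncard_add_one {α : Type*} {N : (Fin 2 → Bool) → α}
    (hdiag : ∀ σ, N σ = N (fun i => !σ i) → ∀ τ, N τ = N σ) (hN : ¬ Injective N) :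
    (range N).ncard = {j | ∃ σ, N σ ≠ N (update σ j (!σ j))}.ncard + 1 := by
  classical
  have hnot (s t : Bool) : (fun i => !(![s, t] : Fin 2 → Bool) i) = ![!s, !t] := by
    ext i; fin_cases i <;> rfl
  have hac : N ![true, true] = N ![false, false] →
      N ![false, true] = N ![true, true] ∧ N ![true, false] = N ![true, true] := fun h =>
    ⟨hdiag _ (hnot true true ▸ h) _, hdiag _ (hnot true true ▸ h) _⟩
  have hbd : N ![false, true] = N ![true, false] →
      N ![true, true] = N ![false, true] ∧ N ![false, false] = N ![false, true] := fun h =>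
    ⟨hdiag _ (hnot false true ▸ h) _, hdiag _ (hnot false true ▸ h) _⟩
  have hcross : N ![true, true] = N ![false, true] ∨ N ![false, true] = N ![false, false] ∨
      N ![false, false] = N ![true, false] ∨ N ![true, false] = N ![true, true] := by
    by_contra! h
    refine hN ?_
    simp [Injective, Fin.forall_fin_succ_pi, Fin.forall_fin_zero_pi, Bool.forall_bool]
    grind
  rw [range_fin_two_bool, ncard_setOf_fin_two]
  simp only [exists_ne_update_zero_iff, exists_ne_update_one_iff]
  convert ncard_quadrants hac hbd hcross using 3

theorem IsLocRegPartition.nuP_eq_betaP_add_one {R : Set (Fin 2 → ℝ)} {P : Set (Set (Fin 2 → ℝ))}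
    {x : Fin 2 → ℝ} {N : (Fin 2 → Bool) → Set (Fin 2 → ℝ)} (hP : IsLocRegPartition R P)
    (hN : ∀ σ, N σ ∈ P ∧ x ∈ N σ ∧ ReachesOrthant (N σ) x σ) (hcross : ¬ Injective N) :
    nuP P x = betaP P x + 1 := by
  rw [nuP, betaP, hP.setOf_mem_eq_range hN]
  simp only [hP.isBoundaryVector_iff_exists_ne hN]
  exact ncard_range_eq_ncard_add_one (fun σ h τ => hP.apply_eq_of_apply_eq_not hN h τ) hcross

end Planar

section Gaps

/-- For `w` outside every interval `[p.1, p.2]` with `p ∈ I`, the closed gap between these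
intervals containing `w`, truncated to `[c, d]`, is `[gapLo c I w, gapHi d I w]`. -/
noncomputable def gapLo (c : ℝ) (I : Finset (ℝ × ℝ)) (w : ℝ) : ℝ :=
  (insert c ((I.filter (·.2 < w)).image Prod.snd)).max' (Finset.insert_nonempty _ _)

noncomputable def gapHi (d : ℝ) (I : Finset (ℝ × ℝ)) (w : ℝ) : ℝ :=
  (insert d ((I.filter (w < ·.1)).image Prod.fst)).min' (Finset.insert_nonempty _ _)

def Avoids (I : Finset (ℝ × ℝ)) (w : ℝ) : Prop := ∀ p ∈ I, w ∉ Icc p.1 p.2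

variable {c d w w' : ℝ} {I : Finset (ℝ × ℝ)}

theorem le_gapLo : c ≤ gapLo c I w :=
  Finset.le_max' _ _ (Finset.mem_insert_self _ _)

theorem gapHi_le : gapHi d I w ≤ d :=
  Finset.min'_le _ _ (Finset.mem_insert_self _ _)

theorem snd_le_gapLo {p : ℝ × ℝ} (hp : p ∈ I) (h : p.2 < w) : p.2 ≤ gapLo c I w :=
  Finset.le_max' _ _ (Finset.mem_insert_of_mem (Finset.mem_image_of_mem _ (by simp [hp, h])))

theorem gapHi_le_fst {p : ℝ × ℝ} (hp : p ∈ I) (h : w < p.1) : gapHi d I w ≤ p.1 :=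
  Finset.min'_le _ _ (Finset.mem_insert_of_mem (Finset.mem_image_of_mem _ (by simp [hp, h])))

theorem gapLo_lt (h : c < w) : gapLo c I w < w := by
  refine (Finset.max'_lt_iff _ _).2 fun e he => ?_
  simp only [Finset.mem_insert, Finset.mem_image, Finset.mem_filter] at he
  rcases he with rfl | ⟨p, ⟨-, hp⟩, rfl⟩
  exacts [h, hp]

theorem lt_gapHi (h : w < d) : w < gapHi d I w := by
  refine (Finset.lt_min'_iff _ _).2 fun e he => ?_
  simp only [Finset.mem_insert, Finset.mem_image, Finset.mem_filter] at he
  rcases he with rfl | ⟨p, ⟨-, hp⟩, rfl⟩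
  exacts [h, hp]

theorem gapLo_mem : gapLo c I w ∈ insert c (I.image Prod.snd) := by
  have := Finset.max'_mem _ (Finset.insert_nonempty c ((I.filter (·.2 < w)).image Prod.snd))
  exact Finset.insert_subset_insert _ (Finset.image_subset_image (Finset.filter_subset _ _)) this

theorem gapHi_mem : gapHi d I w ∈ insert d (I.image Prod.fst) := by
  have := Finset.min'_mem _ (Finset.insert_nonempty d ((I.filter (w < ·.1)).image Prod.fst))
  exact Finset.insert_subset_insert _ (Finset.image_subset_image (Finset.filter_subset _ _)) this

section Invariance

variable (hI : ∀ p ∈ I, p.1 ≤ p.2) (hw : Avoids I w) (hw' : w' ∈ Ioo (gapLo c I w) (gapHi d I w))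
include hI hw hw'

theorem lt_iff_of_mem_gap {p : ℝ × ℝ} (hp : p ∈ I) :
    (p.2 < w' ↔ p.2 < w) ∧ (w' < p.1 ↔ w < p.1) := by
  have hle := hI p hp
  obtain ⟨hlo, hhi⟩ := hw'
  rcases not_and_or.1 (hw p hp) with h | h <;> push Not at h
  · have := gapHi_le_fst (d := d) hp h
    constructor <;> constructor <;> intro <;> linarith
  · have := snd_le_gapLo (c := c) hp h
    constructor <;> constructor <;> intro <;> linarith

theorem avoids_of_mem_gap : Avoids I w' := fun p hp hmem => by
  have h := lt_iff_of_mem_gap hI hw hw' hp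
  exact hw p hp ⟨not_lt.1 fun h' => hmem.1.not_gt (h.2.2 h'),
    not_lt.1 fun h' => hmem.2.not_gt (h.1.2 h')⟩

theorem gapLo_eq_of_mem_gap : gapLo c I w' = gapLo c I w := by
  have : I.filter (·.2 < w') = I.filter (·.2 < w) :=
    Finset.filter_congr fun p hp => (lt_iff_of_mem_gap hI hw hw' hp).1
  simp only [gapLo, this]

theorem gapHi_eq_of_mem_gap : gapHi d I w' = gapHi d I w := by
  have : I.filter (w' < ·.1) = I.filter (w < ·.1) :=
    Finset.filter_congr fun p hp => (lt_iff_of_mem_gap hI hw hw' hp).2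
  simp only [gapHi, this]

end Invariance

end Gaps

namespace Slab

variable (S : Finset (Set (Fin 2 → ℝ))) (A B : Fin 2 → ℝ)

noncomputable def edges (i : Fin 2) : Finset ℝ :=
  S.image (fun Q => (sInf Q : Fin 2 → ℝ) i) ∪ S.image (fun Q => (sSup Q : Fin 2 → ℝ) i)

/-- The vertical lines through the vertical edges of the members of `S`, as degenerate
intervals. -/
noncomputable def cuts : Finset (ℝ × ℝ) := (edges S 0).image fun e => (e, e)

noncomputable def crossing (u : ℝ) : Finset (ℝ × ℝ) :=
  (S.filter fun Q => (sInf Q : Fin 2 → ℝ) 0 < u ∧ u < (sSup Q : Fin 2 → ℝ) 0).image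
    fun Q => ((sInf Q : Fin 2 → ℝ) 1, (sSup Q : Fin 2 → ℝ) 1)

noncomputable def cellLo (p : Fin 2 → ℝ) : Fin 2 → ℝ :=
  ![gapLo (A 0) (cuts S) (p 0), gapLo (A 1) (crossing S (p 0)) (p 1)]

noncomputable def cellHi (p : Fin 2 → ℝ) : Fin 2 → ℝ :=
  ![gapHi (B 0) (cuts S) (p 0), gapHi (B 1) (crossing S (p 0)) (p 1)]

/-- The cell of `p`: the slab between the two cuts nearest to `p`, trimmed to the gap between
the members of `S` crossing it just below and just above `p`. -/
def cell (p : Fin 2 → ℝ) : Set (Fin 2 → ℝ) := Icc (cellLo S A p) (cellHi S B p)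

def IsGeneric (p : Fin 2 → ℝ) : Prop :=
  p ∈ interior (Icc A B) ∧ Avoids (cuts S) (p 0) ∧ Avoids (crossing S (p 0)) (p 1)

def partition : Set (Set (Fin 2 → ℝ)) := ↑S ∪ cell S A B '' {p | IsGeneric S A B p}

variable {S A B}

theorem mem_cuts_of_mem {Q : Set (Fin 2 → ℝ)} (hQ : Q ∈ S) :
    (sInf Q 0, sInf Q 0) ∈ cuts S ∧ (sSup Q 0, sSup Q 0) ∈ cuts S := by
  simp only [cuts, edges, Finset.mem_image, Finset.mem_union, Prod.mk.injEq, and_self]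
  exact ⟨⟨_, Or.inl ⟨Q, hQ, rfl⟩, rfl⟩, ⟨_, Or.inr ⟨Q, hQ, rfl⟩, rfl⟩⟩

theorem cuts_ordered : ∀ q ∈ cuts S, q.1 ≤ q.2 := by
  simp [cuts]

theorem crossing_ordered (hS : ∀ Q ∈ S, IsRect Q) (u : ℝ) : ∀ q ∈ crossing S u, q.1 ≤ q.2 := by
  simp only [crossing, Finset.mem_image, Finset.mem_filter]
  rintro _ ⟨Q, ⟨hQ, -⟩, rfl⟩
  exact ((hS Q hQ).eq_Icc.1 1).le

theorem cellLo_lt {p : Fin 2 → ℝ} (hp : IsGeneric S A B p) (i : Fin 2) : cellLo S A p i < p i := by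
  have := mem_interior_Icc_iff.1 hp.1
  fin_cases i
  exacts [gapLo_lt (this 0).1, gapLo_lt (this 1).1]

theorem lt_cellHi {p : Fin 2 → ℝ} (hp : IsGeneric S A B p) (i : Fin 2) : p i < cellHi S B p i := by
  have := mem_interior_Icc_iff.1 hp.1
  fin_cases i
  exacts [lt_gapHi (this 0).2, lt_gapHi (this 1).2]

theorem isRect_cell {p : Fin 2 → ℝ} (hp : IsGeneric S A B p) : IsRect (cell S A B p) :=
  ⟨_, _, fun i => (cellLo_lt hp i).trans (lt_cellHi hp i), rfl⟩

theorem mem_cell_self {p : Fin 2 → ℝ} (hp : IsGeneric S A B p) : p ∈ cell S A B p :=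
  ⟨fun i => (cellLo_lt hp i).le, fun i => (lt_cellHi hp i).le⟩

theorem cell_subset (p : Fin 2 → ℝ) : cell S A B p ⊆ Icc A B := by
  refine Icc_subset_Icc (fun i => ?_) (fun i => ?_) <;> fin_cases i
  exacts [le_gapLo, le_gapLo, gapHi_le, gapHi_le]

theorem avoids_cuts_iff {u : ℝ} : Avoids (cuts S) u ↔ u ∉ edges S 0 := by
  simp only [Avoids, cuts, Finset.forall_mem_image, Icc_self, mem_singleton_iff]
  exact ⟨fun h hu => h hu rfl, fun h e he hue => h (hue ▸ he)⟩

theorem mem_crossing {u : ℝ} {Q : Set (Fin 2 → ℝ)} (hQ : Q ∈ S) (h0 : sInf Q 0 < u)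
    (h1 : u < sSup Q 0) : (sInf Q 1, sSup Q 1) ∈ crossing S u :=
  Finset.mem_image_of_mem _ (Finset.mem_filter.2 ⟨hQ, h0, h1⟩)

theorem IsGeneric.not_mem (hS : ∀ Q ∈ S, IsRect Q) {p : Fin 2 → ℝ} (hp : IsGeneric S A B p)
    {Q : Set (Fin 2 → ℝ)} (hQ : Q ∈ S) : p ∉ Q := by
  rw [(hS Q hQ).eq_Icc.2, mem_Icc_fin_two]
  rintro ⟨⟨h0, h0'⟩, h1⟩
  have hcut := mem_cuts_of_mem hQ
  have hlt : sInf Q 0 < p 0 := lt_of_le_of_ne h0 fun h => hp.2.1 _ hcut.1 ⟨h.le, h.ge⟩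
  have hlt' : p 0 < sSup Q 0 := lt_of_le_of_ne h0' fun h => hp.2.1 _ hcut.2 ⟨h.ge, h.le⟩
  exact hp.2.2 _ (mem_crossing hQ hlt hlt') h1

theorem isGeneric_of_not_mem (hS : ∀ Q ∈ S, IsRect Q) {p : Fin 2 → ℝ}
    (hp : p ∈ interior (Icc A B)) (hp0 : p 0 ∉ edges S 0) (hpS : ∀ Q ∈ S, p ∉ Q) :
    IsGeneric S A B p := by
  refine ⟨hp, avoids_cuts_iff.2 hp0, ?_⟩
  simp only [Avoids, crossing, Finset.forall_mem_image, Finset.mem_filter]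
  rintro Q ⟨hQ, h0, h0'⟩ h1
  refine hpS Q hQ ?_
  rw [(hS Q hQ).eq_Icc.2, mem_Icc_fin_two]
  exact ⟨⟨h0.le, h0'.le⟩, h1⟩

theorem IsGeneric.of_mem_interior_cell (hS : ∀ Q ∈ S, IsRect Q) {p z : Fin 2 → ℝ}
    (hp : IsGeneric S A B p) (hz : z ∈ interior (cell S A B p)) :
    IsGeneric S A B z ∧ cell S A B z = cell S A B p := by
  have hzR := interior_mono (cell_subset p) hz
  rw [cell, mem_interior_Icc_iff] at hz
  have hz0 : z 0 ∈ Ioo (gapLo (A 0) (cuts S) (p 0)) (gapHi (B 0) (cuts S) (p 0)) := hz 0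
  have hz1 : z 1 ∈ Ioo (gapLo (A 1) (crossing S (p 0)) (p 1))
      (gapHi (B 1) (crossing S (p 0)) (p 1)) := hz 1
  have hcross : crossing S (z 0) = crossing S (p 0) := by
    unfold crossing
    refine congrArg (Finset.image _) (Finset.filter_congr fun Q hQ => ?_)
    exact and_congr (lt_iff_of_mem_gap cuts_ordered hp.2.1 hz0 (mem_cuts_of_mem hQ).1).1
      (lt_iff_of_mem_gap cuts_ordered hp.2.1 hz0 (mem_cuts_of_mem hQ).2).2
  have hI := crossing_ordered hS (p 0)
  refine ⟨⟨hzR, avoids_of_mem_gap cuts_ordered hp.2.1 hz0,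
    hcross ▸ avoids_of_mem_gap hI hp.2.2 hz1⟩, ?_⟩
  simp only [cell, cellLo, cellHi, hcross, gapLo_eq_of_mem_gap cuts_ordered hp.2.1 hz0,
    gapHi_eq_of_mem_gap cuts_ordered hp.2.1 hz0, gapLo_eq_of_mem_gap hI hp.2.2 hz1,
    gapHi_eq_of_mem_gap hI hp.2.2 hz1]

theorem cellLo_mem (p : Fin 2 → ℝ) (i : Fin 2) : cellLo S A p i ∈ insert (A i) (edges S i) := by
  fin_cases i
  · refine Finset.insert_subset_insert _ ?_ gapLo_mem
    intro e
    simp [cuts]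
  · refine Finset.insert_subset_insert _ ?_ gapLo_mem
    intro e
    simp only [crossing, edges, Finset.mem_image, Finset.mem_filter, Finset.mem_union]
    rintro ⟨_, ⟨Q, ⟨hQ, -⟩, rfl⟩, rfl⟩
    exact Or.inr ⟨Q, hQ, rfl⟩

theorem cellHi_mem (p : Fin 2 → ℝ) (i : Fin 2) : cellHi S B p i ∈ insert (B i) (edges S i) := by
  fin_cases i
  · refine Finset.insert_subset_insert _ ?_ gapHi_mem
    intro e
    simp [cuts]
  · refine Finset.insert_subset_insert _ ?_ gapHi_mem
    intro e
    simp only [crossing, edges, Finset.mem_image, Finset.mem_filter, Finset.mem_union]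
    rintro ⟨_, ⟨Q, ⟨hQ, -⟩, rfl⟩, rfl⟩
    exact Or.inl ⟨Q, hQ, rfl⟩

theorem partition_finite : (partition S A B).Finite := by
  let corners (C : Fin 2 → ℝ) : Set (Fin 2 → ℝ) := pi univ fun i => ↑(insert (C i) (edges S i))
  have hcorners (C : Fin 2 → ℝ) : (corners C).Finite := Finite.pi fun i => Finset.finite_toSet _
  refine S.finite_toSet.union (((hcorners A).prod (hcorners B)).image
    (fun q => Icc q.1 q.2) |>.subset ?_)
  rintro _ ⟨p, -, rfl⟩
  exact ⟨(cellLo S A p, cellHi S B p), ⟨fun i _ => cellLo_mem p i, fun i _ => cellHi_mem p i⟩, rfl⟩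

theorem isRect_of_mem_partition (hS : ∀ Q ∈ S, IsRect Q) {K : Set (Fin 2 → ℝ)}
    (hK : K ∈ partition S A B) : IsRect K := by
  rcases hK with hK | ⟨p, hp, rfl⟩
  exacts [hS K hK, isRect_cell hp]

/-- Generic points are dense in `Icc A B` and each lies in its own cell; the union of the
finitely many closed members is closed, hence it is all of `Icc A B`. -/
theorem sUnion_partition (hAB : ∀ i, A i < B i) (hS : ∀ Q ∈ S, IsRect Q ∧ Q ⊆ Icc A B) :
    ⋃₀ partition S A B = Icc A B := by
  refine (sUnion_subset fun K hK => ?_).antisymm ?_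
  · rcases hK with hK | ⟨p, -, rfl⟩
    exacts [(hS K hK).2, cell_subset p]
  set D := (fun p : Fin 2 → ℝ => p 0) ⁻¹' (↑(edges S 0))ᶜ
  have hD : Dense D := ((edges S 0).countable_toSet.dense_compl ℝ).preimage (isOpenMap_eval 0)
  have hcover : interior (Icc A B) ∩ D ⊆ ⋃₀ partition S A B := by
    rintro p ⟨hp, hp0⟩
    by_cases h : ∃ Q ∈ S, p ∈ Q
    · obtain ⟨Q, hQ, hpQ⟩ := h
      exact ⟨Q, Or.inl hQ, hpQ⟩
    · push Not at h
      have hgen := isGeneric_of_not_mem (fun Q hQ => (hS Q hQ).1) hp hp0 h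
      exact ⟨_, Or.inr ⟨p, hgen, rfl⟩, mem_cell_self hgen⟩
  have hclosed : IsClosed (⋃₀ partition S A B) :=
    isClosed_sUnion_of_isRect partition_finite fun _ =>
      isRect_of_mem_partition fun Q hQ => (hS Q hQ).1
  have hne : (interior (Icc A B)).Nonempty :=
    ⟨fun i => (A i + B i) / 2, mem_interior_Icc_iff.2 fun i => by constructor <;> linarith [hAB i]⟩
  calc Icc A B = closure (interior (Icc A B)) := by
        rw [(convex_Icc (𝕜 := ℝ) A B).closure_interior_eq_closure_of_nonempty_interior hne,
          isClosed_Icc.closure_eq]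
    _ ⊆ ⋃₀ partition S A B :=
        closure_minimal ((hD.open_subset_closure_inter isOpen_interior).trans
          (closure_minimal hcover hclosed)) hclosed

theorem interior_inter_interior_eq_empty (hS : ∀ Q ∈ S, IsRect Q)
    (hdisj : ∀ Q₁ ∈ S, ∀ Q₂ ∈ S, Q₁ ≠ Q₂ → Q₁ ∩ Q₂ = ∅) {K₁ K₂ : Set (Fin 2 → ℝ)}
    (hK₁ : K₁ ∈ partition S A B) (hK₂ : K₂ ∈ partition S A B) (hne : K₁ ≠ K₂) :
    interior K₁ ∩ interior K₂ = ∅ := by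
  refine eq_empty_of_forall_notMem fun z ⟨hz₁, hz₂⟩ => ?_
  rcases hK₁ with hK₁ | ⟨p₁, hp₁, rfl⟩ <;> rcases hK₂ with hK₂ | ⟨p₂, hp₂, rfl⟩
  · exact (hdisj _ hK₁ _ hK₂ hne).subset ⟨interior_subset hz₁, interior_subset hz₂⟩
  · exact (hp₂.of_mem_interior_cell hS hz₂).1.not_mem hS hK₁ (interior_subset hz₁)
  · exact (hp₁.of_mem_interior_cell hS hz₁).1.not_mem hS hK₂ (interior_subset hz₂)
  · exact hne ((hp₁.of_mem_interior_cell hS hz₁).2.symm.trans (hp₂.of_mem_interior_cell hS hz₂).2)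

theorem isLocRegPartition (hAB : ∀ i, A i < B i) (hS : ∀ Q ∈ S, IsRect Q ∧ Q ⊆ Icc A B)
    (hdisj : ∀ Q₁ ∈ S, ∀ Q₂ ∈ S, Q₁ ≠ Q₂ → Q₁ ∩ Q₂ = ∅) :
    IsLocRegPartition (Icc A B) (partition S A B) :=
  have hrect Q hQ := (hS Q hQ).1
  ⟨⟨partition_finite, fun _ => isRect_of_mem_partition hrect, sUnion_partition hAB hS⟩,
    fun _ hK₁ _ hK₂ => interior_inter_interior_eq_empty hrect hdisj hK₁ hK₂⟩

theorem sInf_cell {p : Fin 2 → ℝ} (hp : IsGeneric S A B p) : sInf (cell S A B p) = cellLo S A p :=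
  csInf_Icc fun i => ((cellLo_lt hp i).trans (lt_cellHi hp i)).le

theorem sSup_cell {p : Fin 2 → ℝ} (hp : IsGeneric S A B p) : sSup (cell S A B p) = cellHi S B p :=
  csSup_Icc fun i => ((cellLo_lt hp i).trans (lt_cellHi hp i)).le

theorem exists_top_eq_cellLo {p : Fin 2 → ℝ} (h : A 1 < cellLo S A p 1) :
    ∃ W ∈ S, sSup W 1 = cellLo S A p 1 ∧ sInf W 0 ≤ cellLo S A p 0 ∧ cellHi S B p 0 ≤ sSup W 0 := by
  rcases Finset.mem_insert.1 (gapLo_mem (c := A 1) (I := crossing S (p 0)) (w := p 1)) with h' | h'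
  · exact absurd h' h.ne'
  simp only [crossing, Finset.mem_image, Finset.mem_filter] at h'
  obtain ⟨_, ⟨W, ⟨hW, h0, h0'⟩, rfl⟩, hW1⟩ := h'
  exact ⟨W, hW, hW1, snd_le_gapLo (mem_cuts_of_mem hW).1 h0,
    gapHi_le_fst (mem_cuts_of_mem hW).2 h0'⟩

theorem exists_mem_reachesOrthant_of_bottom (hS : ∀ Q ∈ S, IsRect Q) {p x : Fin 2 → ℝ}
    (hp : IsGeneric S A B p) (hx : x ∈ cell S A B p) (hA : A 1 < x 1)
    (hbot : x 1 = cellLo S A p 1) {s : Bool} (hreach : ReachesOrthant (cell S A B p) x ![s, true]) :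
    ∃ W ∈ S, x ∈ W ∧ ReachesOrthant W x ![s, false] := by
  obtain ⟨W, hW, htop, hleft, hright⟩ := exists_top_eq_cellLo (B := B) (hbot ▸ hA)
  have hWrect := hS W hW
  have htop' : sSup W 1 = x 1 := htop.trans hbot.symm
  refine ⟨W, hW, ?_, fun i => ?_⟩
  · rw [hWrect.eq_Icc.2, mem_Icc_fin_two]
    exact ⟨⟨hleft.trans (hx.1 0), (hx.2 0).trans hright⟩, htop' ▸ (hWrect.eq_Icc.1 1).le, htop'.ge⟩
  fin_cases i
  · have h0 := hreach 0
    rw [sInf_cell hp, sSup_cell hp] at h0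
    cases s
    · simpa using hleft.trans_lt (by simpa using h0)
    · simpa using (by simpa using h0 : x 0 < cellHi S B p 0).trans_le hright
  · simpa [← htop'] using hWrect.eq_Icc.1 1

variable {x : Fin 2 → ℝ} {N : (Fin 2 → Bool) → Set (Fin 2 → ℝ)}

theorem mem_or_mem_of_ne (hP : IsLocRegPartition (Icc A B) (partition S A B))
    (hx : x ∈ interior (Icc A B))
    (hN : ∀ σ, N σ ∈ partition S A B ∧ x ∈ N σ ∧ ReachesOrthant (N σ) x σ) (s : Bool)
    (hne : N ![s, true] ≠ N ![s, false]) : N ![s, true] ∈ S ∨ N ![s, false] ∈ S := by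
  obtain ⟨hK, hxK, hreach⟩ := hN ![s, true]
  rcases hK with hK | ⟨p, hp, hKp⟩
  · exact Or.inl hK
  rw [← hKp] at hxK hreach
  have hbot : x 1 = cellLo S A p 1 := by
    refine ((hxK.1 1).eq_or_lt.resolve_right fun h => hne ?_).symm
    rw [← hKp]
    refine hP.eq_apply_of_reachesOrthant hN (Or.inr ⟨p, hp, rfl⟩) hxK ?_
    simpa [update_vec_two_one] using
      (hreach.update_iff 1).2 ⟨(sInf_cell hp).symm ▸ h, by simpa using hreach 1⟩
  obtain ⟨W, hW, hxW, hWreach⟩ := exists_mem_reachesOrthant_of_bottom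
    (fun Q hQ => hP.isRect_of_mem (Or.inl hQ)) hp hxK (mem_interior_Icc_iff.1 hx 1).1 hbot hreach
  exact Or.inr ((hP.eq_apply_of_reachesOrthant hN (Or.inl hW) hxW hWreach) ▸ hW)

theorem not_injective (hP : IsLocRegPartition (Icc A B) (partition S A B))
    (hdisj : ∀ Q₁ ∈ S, ∀ Q₂ ∈ S, Q₁ ≠ Q₂ → Q₁ ∩ Q₂ = ∅) (hx : x ∈ interior (Icc A B))
    (hN : ∀ σ, N σ ∈ partition S A B ∧ x ∈ N σ ∧ ReachesOrthant (N σ) x σ) : ¬ Injective N := by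
  intro hinj
  have hne {σ τ : Fin 2 → Bool} (h : σ ≠ τ) : N σ ≠ N τ := fun e => h (hinj e)
  have hdistinct {σ τ : Fin 2 → Bool} (h : σ ≠ τ) (hσ : N σ ∈ S) (hτ : N τ ∈ S) : False :=
    (hdisj _ hσ _ hτ (hne h)).subset ⟨(hN σ).2.1, (hN τ).2.1⟩
  rcases mem_or_mem_of_ne hP hx hN true (hne (by decide)) with h₁ | h₁ <;>
    rcases mem_or_mem_of_ne hP hx hN false (hne (by decide)) with h₂ | h₂ <;>
    exact hdistinct (by decide) h₁ h₂

end Slab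

/-- every finite collection of pairwise disjoint subrectangles of a
2-dimensional rectangle `R` extends to a minimal locally regulated partition of `R`. -/
theorem stmt10 (R : Set (Fin 2 → ℝ)) (hR : IsRect R)
    (S : Set (Set (Fin 2 → ℝ))) (hfin : S.Finite)
    (hsub : ∀ Q ∈ S, IsRect Q ∧ Q ⊆ R)
    (hdisj : ∀ Q₁ ∈ S, ∀ Q₂ ∈ S, Q₁ ≠ Q₂ → Q₁ ∩ Q₂ = ∅) :
    ∃ P : Set (Set (Fin 2 → ℝ)), IsLocRegPartition R P ∧ S ⊆ P ∧
      ∀ x ∈ interior R, nuP P x = betaP P x + 1 := by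
  obtain ⟨A, B, hAB, rfl⟩ := hR
  obtain ⟨S, rfl⟩ := hfin.exists_finset_coe
  have hP := Slab.isLocRegPartition hAB hsub hdisj
  refine ⟨Slab.partition S A B, hP, subset_union_left, fun x hx => ?_⟩
  choose N hN using hP.exists_mem_reachesOrthant hx
  exact hP.nuP_eq_betaP_add_one hN (Slab.not_injective hP hdisj hx hN)
end
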